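/- arXiv:2601.11490 — 3 statements merged into one kernel-verified Lean document; each statement's English description precedes it below -/
import Mathlib

section
/- For all integers n ≥ 2 and H ≥ 2 and all n-tuples u_1,…,u_H, u_∞ of positive integers, there exist finite subsets A_1,…,A_n of the integers such that for every h ∈ {1,…,H} and all indices i, j ∈ {1,…,n}, |hA_i| ≤ |hA_j| if and only if (u_h)_i ≤ (u_h)_j, and for every integer h > H and all indices i, j ∈ {1,…,n}, |hA_i| ≤ |hA_j| if and only if (u_∞)_i ≤ (u_∞)_j. -/
/-!
The sets are staircases: level `h` consists of the stations `[tQ, tQ + t a - γ (t - h)]`,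
`0 ≤ t ≤ N`, and the long interval `[c, 2ch]`, `c = (N + 1) Q`. When the gap profile `γ` vanishes
at `0` and is monotone and subadditive, level `h` plus level `1` is level `h + 1`, so the `h`-fold
sumset of level `1` is level `h`, of size `(terms common to all the sets) + a ∑ t - ∑ₜ γ (t - h)`.
The deficit `∑ₜ γ (t - h)` vanishes once `h ≥ N = H + 1`, and then only the slope
`a = 2R + uinf i` distinguishes the sets. For `h < N` one prescribes the deficit so that it cancels
the slope's contribution and leaves `u h i`, and takes `γ` to be its backward difference; a
quadratic term in the deficit keeps `γ` increasing, and a large constant `R` keeps its values in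
`[R, 2R]`, hence subadditive.
-/

/-- The `h`-fold sumset of a finite set `A` of integers:
`hA = {a₁ + ⋯ + a_h : aᵢ ∈ A}`. -/
def finSumset (h : ℕ) (A : Finset ℤ) : Finset ℤ :=
  (Fintype.piFinset fun _ : Fin h => A).image fun f => ∑ i, f i

open Finset Pointwise

lemma finSumset_eq_nsmul (h : ℕ) (A : Finset ℤ) : finSumset h A = h • A := by
  ext x
  rw [← Finset.mem_coe (s := h • A), Finset.coe_nsmul, Set.mem_nsmul_iff_sum]
  simp [finSumset]

lemma Int.Icc_add_Icc {a b c d : ℤ} (hab : a ≤ b) (hcd : c ≤ d) :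
    Icc a b + Icc c d = Icc (a + c) (b + d) := by
  refine (Icc_add_Icc_subset a b c d).antisymm fun x hx => ?_
  rw [mem_Icc] at hx
  refine mem_add.2 ⟨min (x - c) b, ?_, x - min (x - c) b, ?_, by ring⟩ <;>
    simp only [mem_Icc] <;> omega

lemma sum_range_backward_diff (Φ : ℕ → ℤ) (N h : ℕ) (hΦ : ∀ k, N ≤ k → Φ k = 0) :
    ∑ t ∈ range (N + 1), (Φ (N - (t - h)) - Φ (N + 1 - (t - h))) = Φ h := by
  have hterm : ∀ t ∈ range (N + 1), Φ (N - (t - h)) - Φ (N + 1 - (t - h)) =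
      Φ (N + h + 1 - (t + 1)) - Φ (N + h + 1 - t) := by
    intro t ht
    rw [mem_range] at ht
    rcases le_or_gt h t with hht | hht
    · rw [show N - (t - h) = N + h + 1 - (t + 1) by omega,
        show N + 1 - (t - h) = N + h + 1 - t by omega]
    · rw [hΦ (N - (t - h)) (by omega), hΦ (N + 1 - (t - h)) (by omega),
        hΦ (N + h + 1 - (t + 1)) (by omega), hΦ (N + h + 1 - t) (by omega)]
  rw [sum_congr rfl hterm, sum_range_sub (fun t => Φ (N + h + 1 - t)),
    show N + h + 1 - (N + 1) = h by omega, Nat.sub_zero, hΦ (N + h + 1) (by omega), sub_zero]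

structure IsStairProfile (N : ℕ) (a : ℤ) (γ : ℕ → ℤ) : Prop where
  zero : γ 0 = 0
  mono : MonotoneOn γ (Set.Iic N)
  subadd : ∀ x y, x + y ≤ N → γ (x + y) ≤ γ x + γ y
  le_slope : ∀ m ≤ N, γ m ≤ a

def stairStep (a : ℤ) (γ : ℕ → ℤ) (t h : ℕ) : ℤ := t * a - γ (t - h)

noncomputable def staircase (N : ℕ) (Q a : ℤ) (γ : ℕ → ℤ) (h : ℕ) : Finset ℤ :=
  (range (N + 1)).biUnion (fun t => Icc (t * Q) (t * Q + stairStep a γ t h)) ∪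
    Icc ((N + 1) * Q) (2 * (N + 1) * Q * h)

lemma stairStep_succ (a : ℤ) (γ : ℕ → ℤ) {t : ℕ} (h : ℕ) :
    stairStep a γ (t + 1) (h + 1) = stairStep a γ t h + a := by
  unfold stairStep
  rw [Nat.add_sub_add_right]
  push_cast; ring

namespace IsStairProfile

variable {N t s h : ℕ} {a : ℤ} {γ : ℕ → ℤ}

lemma nonneg (hγ : IsStairProfile N a γ) {m : ℕ} (hm : m ≤ N) : 0 ≤ γ m :=
  hγ.zero ▸ hγ.mono (Set.mem_Iic.2 (Nat.zero_le N)) (Set.mem_Iic.2 hm) (Nat.zero_le m)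

lemma slope_nonneg (hγ : IsStairProfile N a γ) : 0 ≤ a :=
  (hγ.nonneg le_rfl).trans (hγ.le_slope N le_rfl)

lemma stairStep_nonneg (hγ : IsStairProfile N a γ) (ht : t ≤ N) : 0 ≤ stairStep a γ t h := by
  have ha := hγ.slope_nonneg
  unfold stairStep
  rcases Nat.eq_zero_or_pos (t - h) with hth | hth
  · rw [hth, hγ.zero, sub_zero]; exact mul_nonneg (Nat.cast_nonneg t) ha
  · have : γ (t - h) ≤ a := hγ.le_slope _ (by omega)
    have : a ≤ t * a := le_mul_of_one_le_left ha (by exact_mod_cast (show 1 ≤ t by omega))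
    linarith

lemma stairStep_lt (hγ : IsStairProfile N a γ) {Q : ℤ} (hQ : N * a < Q) (ht : t ≤ N) :
    stairStep a γ t h < Q := by
  have : (t : ℤ) * a ≤ N * a := mul_le_mul_of_nonneg_right (by exact_mod_cast ht) hγ.slope_nonneg
  have := hγ.nonneg (m := t - h) (by omega)
  unfold stairStep
  linarith

lemma stairStep_add (hγ : IsStairProfile N a γ) (hts : t + s ≤ N) :
    stairStep a γ t h + stairStep a γ s 1 ≤ stairStep a γ (t + s) (h + 1) := by
  suffices γ (t + s - (h + 1)) ≤ γ (t - h) + γ (s - 1) by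
    unfold stairStep; push_cast; linarith
  rcases le_or_gt t h with hth | hth
  · rw [Nat.sub_eq_zero_of_le hth, hγ.zero, zero_add]
    exact hγ.mono (Set.mem_Iic.2 (by omega)) (Set.mem_Iic.2 (by omega)) (by omega)
  rcases Nat.eq_zero_or_pos s with rfl | hs
  · rw [Nat.zero_sub, hγ.zero, add_zero, add_zero]
    exact hγ.mono (Set.mem_Iic.2 (by omega)) (Set.mem_Iic.2 (by omega)) (by omega)
  · rw [show t + s - (h + 1) = (t - h) + (s - 1) by omega]
    exact hγ.subadd _ _ (by omega)

end IsStairProfile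

section Staircase

variable {N : ℕ} {Q a : ℤ} {γ : ℕ → ℤ}

lemma mem_staircase {h : ℕ} {x : ℤ} : x ∈ staircase N Q a γ h ↔
    (∃ t ≤ N, t * Q ≤ x ∧ x ≤ t * Q + stairStep a γ t h) ∨
      ((N + 1) * Q ≤ x ∧ x ≤ 2 * (N + 1) * Q * h) := by
  simp [staircase]

lemma Icc_subset_staircase {t : ℕ} (h : ℕ) (ht : t ≤ N) :
    Icc (t * Q) (t * Q + stairStep a γ t h) ⊆ staircase N Q a γ h := fun _ hx =>
  mem_staircase.2 (Or.inl ⟨t, ht, mem_Icc.1 hx⟩)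

lemma Icc_top_subset_staircase (h : ℕ) :
    Icc ((N + 1) * Q) (2 * (N + 1) * Q * h) ⊆ staircase N Q a γ h := fun _ hx =>
  mem_staircase.2 (Or.inr (mem_Icc.1 hx))

variable (hγ : IsStairProfile N a γ) (hQ : N * a < Q)
include hγ hQ

lemma IsStairProfile.spacing_nonneg : 0 ≤ Q :=
  (mul_nonneg (Nat.cast_nonneg N) hγ.slope_nonneg).trans hQ.le

lemma IsStairProfile.top_le {h : ℕ} (hh : 1 ≤ h) : (N + 1) * Q ≤ 2 * (N + 1) * Q * h := by
  have : (1 : ℤ) ≤ 2 * h := by norm_cast; omega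
  nlinarith [mul_le_mul_of_nonneg_left this (by have := hγ.spacing_nonneg hQ; positivity :
    (0 : ℤ) ≤ (N + 1) * Q)]

lemma IsStairProfile.lt_top_of_le_station {t h : ℕ} (ht : t ≤ N) {x : ℤ}
    (hx : x ≤ t * Q + stairStep a γ t h) : x < (N + 1) * Q := by
  have : (t : ℤ) * Q ≤ N * Q :=
    mul_le_mul_of_nonneg_right (by exact_mod_cast ht) (hγ.spacing_nonneg hQ)
  have := hγ.stairStep_lt hQ ht (h := h)
  linarith

lemma IsStairProfile.mem_staircase_bounds {h : ℕ} (hh : 1 ≤ h) {x : ℤ}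
    (hx : x ∈ staircase N Q a γ h) : 0 ≤ x ∧ x ≤ 2 * (N + 1) * Q * h := by
  have hQ0 := hγ.spacing_nonneg hQ
  rcases mem_staircase.1 hx with ⟨t, ht, hxl, hxr⟩ | ⟨hxl, hxr⟩
  · have := hγ.lt_top_of_le_station hQ ht hxr
    have := hγ.top_le hQ hh
    exact ⟨(mul_nonneg (Nat.cast_nonneg t) hQ0).trans hxl, by linarith⟩
  · exact ⟨(mul_nonneg (by positivity) hQ0).trans hxl, hxr⟩

lemma IsStairProfile.staircase_add_one {h : ℕ} (hh : 1 ≤ h) :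
    staircase N Q a γ h + staircase N Q a γ 1 = staircase N Q a γ (h + 1) := by
  have hQ0 := hγ.spacing_nonneg hQ
  have htop := hγ.top_le hQ hh
  apply Subset.antisymm
  · intro x hx
    obtain ⟨y, hy, z, hz, rfl⟩ := mem_add.1 hx
    have hyb := hγ.mem_staircase_bounds hQ hh hy
    have hzb := hγ.mem_staircase_bounds hQ le_rfl hz
    push_cast at hyb hzb ⊢
    suffices (N + 1) * Q ≤ y + z ∨
        ∃ t ≤ N, t * Q ≤ y + z ∧ y + z ≤ t * Q + stairStep a γ t (h + 1) by
      rcases this with hbig | hstation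
      · exact Icc_top_subset_staircase _ (mem_Icc.2 ⟨hbig, by push_cast; linarith⟩)
      · exact mem_staircase.2 (Or.inl hstation)
    rcases mem_staircase.1 hy with ⟨t, ht, hyl, hyr⟩ | ⟨hyl, -⟩ <;>
      rcases mem_staircase.1 hz with ⟨s, hs, hzl, hzr⟩ | ⟨hzl, -⟩
    · rcases le_or_gt (t + s) N with hts | hts
      · refine Or.inr ⟨t + s, hts, by push_cast; linarith, ?_⟩
        have := hγ.stairStep_add (h := h) hts
        push_cast; linarith
      · left
        have : ((N : ℤ) + 1) * Q ≤ (t + s : ℕ) * Q :=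
          mul_le_mul_of_nonneg_right (by exact_mod_cast hts) hQ0
        push_cast at this; linarith
    all_goals left; linarith
  · intro x hx
    rcases mem_staircase.1 hx with ⟨_ | t, ht, hxl, hxr⟩ | ⟨hxl, hxr⟩
    · have hx0 : x = 0 := by
        simp only [stairStep, Nat.zero_sub, hγ.zero] at hxl hxr; push_cast at hxl hxr; linarith
      have h0 : ∀ k, (0 : ℤ) ∈ staircase N Q a γ k := fun k =>
        Icc_subset_staircase k (Nat.zero_le N) (by simp [stairStep, hγ.zero])
      exact mem_add.2 ⟨0, h0 h, 0, h0 1, by rw [hx0, add_zero]⟩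
    · have hsplit : Icc ((t + 1 : ℕ) * Q) ((t + 1 : ℕ) * Q + stairStep a γ (t + 1) (h + 1)) =
          Icc (t * Q) (t * Q + stairStep a γ t h) + Icc ((1 : ℕ) * Q) ((1 : ℕ) * Q + a) := by
        rw [Int.Icc_add_Icc (by linarith [hγ.stairStep_nonneg (t := t) (h := h) (by omega)])
          (by linarith [hγ.slope_nonneg]), stairStep_succ]
        push_cast; ring_nf
      have hstep : stairStep a γ 1 1 = a := by simp [stairStep, hγ.zero]
      refine add_subset_add (Icc_subset_staircase h (by omega))
        (hstep ▸ Icc_subset_staircase 1 (by omega)) (hsplit ▸ mem_Icc.2 ⟨hxl, hxr⟩)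
    · rcases le_or_gt x (2 * (N + 1) * Q * h) with hxh | hxh
      · exact mem_add.2 ⟨x, Icc_top_subset_staircase h (mem_Icc.2 ⟨hxl, hxh⟩), 0,
          Icc_subset_staircase 1 (Nat.zero_le N) (by simp [stairStep, hγ.zero]), add_zero x⟩
      · have h2c : 2 * (N + 1) * Q ≤ 2 * (N + 1) * Q * h :=
          le_mul_of_one_le_right (by positivity) (by exact_mod_cast hh)
        refine add_subset_add (Icc_top_subset_staircase h) (Icc_top_subset_staircase 1) ?_
        rw [Int.Icc_add_Icc htop (by simpa using hγ.top_le hQ le_rfl)]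
        push_cast at hxr ⊢
        exact mem_Icc.2 ⟨by linarith, by linarith⟩

lemma IsStairProfile.nsmul_staircase_one {h : ℕ} (hh : 1 ≤ h) :
    h • staircase N Q a γ 1 = staircase N Q a γ h := by
  induction h, hh using Nat.le_induction with
  | base => exact one_nsmul _
  | succ h hh ih => rw [succ_nsmul, ih, hγ.staircase_add_one hQ hh]

lemma IsStairProfile.card_staircase {h : ℕ} (hh : 1 ≤ h) :
    (#(staircase N Q a γ h) : ℤ) = ∑ t ∈ range (N + 1), (stairStep a γ t h + 1) +
      (2 * (N + 1) * Q * h - (N + 1) * Q + 1) := by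
  have hQ0 := hγ.spacing_nonneg hQ
  have hstations : ∀ t t', t < t' → t' ≤ N → Disjoint (Icc (t * Q) (t * Q + stairStep a γ t h))
      (Icc (t' * Q) (t' * Q + stairStep a γ t' h)) := by
    intro t t' htt' ht'
    refine disjoint_left.2 fun x hx hx' => ?_
    rw [mem_Icc] at hx hx'
    have := hγ.stairStep_lt hQ (t := t) (h := h) (by omega)
    have : ((t : ℤ) + 1) * Q ≤ t' * Q := mul_le_mul_of_nonneg_right (by exact_mod_cast htt') hQ0
    linarith
  have htop : Disjoint ((range (N + 1)).biUnion fun t => Icc (t * Q) (t * Q + stairStep a γ t h))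
      (Icc ((N + 1) * Q) (2 * (N + 1) * Q * h)) := by
    refine disjoint_left.2 fun x hx hx' => ?_
    obtain ⟨t, ht, hxt⟩ := mem_biUnion.1 hx
    have := hγ.lt_top_of_le_station hQ (Nat.lt_succ_iff.1 (mem_range.1 ht)) (mem_Icc.1 hxt).2
    linarith [(mem_Icc.1 hx').1]
  rw [staircase, card_union_of_disjoint htop, card_biUnion]
  · push_cast
    congr 1
    · refine sum_congr rfl fun t ht => ?_
      rw [Int.card_Icc, Int.toNat_of_nonneg]
      · ring
      · linarith [hγ.stairStep_nonneg (t := t) (h := h) (Nat.lt_succ_iff.1 (mem_range.1 ht))]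
    · rw [Int.card_Icc, Int.toNat_of_nonneg] <;> linarith [hγ.top_le hQ hh]
  · intro t ht t' ht' hne
    rcases lt_or_gt_of_ne hne with hlt | hlt
    · exact hstations t t' hlt (Nat.lt_succ_iff.1 (mem_range.1 ht'))
    · exact (hstations t' t hlt (Nat.lt_succ_iff.1 (mem_range.1 ht))).symm

end Staircase

section Construction

variable (N W : ℕ) (f : ℕ → ℕ) (p : ℕ)

def triangle : ℤ := ∑ t ∈ range (N + 1), (t : ℤ)

def stairNoise : ℤ := (triangle N + 1) * W

def stairBase : ℤ := 2 * N * stairNoise N W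

def stairDeficit (k : ℕ) : ℤ :=
  if k < N then
    stairBase N W * (N - k : ℕ) + stairNoise N W * (N - k : ℕ) ^ 2 + triangle N * p - f k
  else 0

def stairGap (m : ℕ) : ℤ := stairDeficit N W f p (N - m) - stairDeficit N W f p (N + 1 - m)

lemma triangle_nonneg : 0 ≤ triangle N := sum_nonneg fun t _ => Nat.cast_nonneg t

lemma triangle_pos (hN : 0 < N) : 0 < triangle N := by
  rw [triangle, sum_range_succ]
  have := triangle_nonneg (N - 1)
  rw [triangle, show N - 1 + 1 = N by omega] at this
  have : (0 : ℤ) < N := by exact_mod_cast hN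
  linarith

lemma stairNoise_nonneg : 0 ≤ stairNoise N W :=
  mul_nonneg (by linarith [triangle_nonneg N]) (Nat.cast_nonneg W)

lemma sum_stairGap (h : ℕ) :
    ∑ t ∈ range (N + 1), stairGap N W f p (t - h) = stairDeficit N W f p h :=
  sum_range_backward_diff _ N h fun k hk => if_neg (by omega)

variable {N W f p}

lemma stairGap_bounds (hf : ∀ k < N, f k ≤ W) (hp : p ≤ W) {m : ℕ} (hm : 1 ≤ m) (hmN : m ≤ N) :
    stairBase N W + 2 * (m - 1) * stairNoise N W ≤ stairGap N W f p m ∧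
      stairGap N W f p m ≤ stairBase N W + 2 * m * stairNoise N W := by
  have hκ := triangle_nonneg N
  have hfW : ∀ k < N, (f k : ℤ) ≤ W := fun k hk => by exact_mod_cast hf k hk
  have hpW : (p : ℤ) ≤ W := by exact_mod_cast hp
  have hκp : triangle N * p ≤ triangle N * W := mul_le_mul_of_nonneg_left hpW hκ
  unfold stairGap stairDeficit stairNoise
  rw [if_pos (by omega), Nat.sub_sub_self hmN]
  rcases Nat.eq_or_lt_of_le hm with rfl | hm2
  · rw [if_neg (by omega)]
    have := hfW (N - 1) (by omega)
    push_cast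
    constructor <;> nlinarith [Nat.cast_nonneg (α := ℤ) (f (N - 1)), Nat.cast_nonneg (α := ℤ) p]
  · rw [if_pos (by omega), show N - (N + 1 - m) = m - 1 by omega]
    have := hfW (N - m) (by omega)
    have := hfW (N + 1 - m) (by omega)
    push_cast [Nat.cast_sub hm]
    constructor <;> nlinarith [Nat.cast_nonneg (α := ℤ) (f (N - m)),
      Nat.cast_nonneg (α := ℤ) (f (N + 1 - m))]

lemma isStairProfile_stairGap (hf : ∀ k < N, f k ≤ W) (hp : p ≤ W) :
    IsStairProfile N (2 * stairBase N W + p) (stairGap N W f p) := by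
  have hB := stairNoise_nonneg N W
  have hR : stairBase N W = 2 * N * stairNoise N W := rfl
  have hzero : stairGap N W f p 0 = 0 := by
    simp only [stairGap, stairDeficit, if_neg (show ¬N - 0 < N by omega),
      if_neg (show ¬N + 1 - 0 < N by omega), sub_zero]
  have hR0 : 0 ≤ stairBase N W := by rw [hR]; positivity
  have hupper : ∀ m, 1 ≤ m → m ≤ N → stairGap N W f p m ≤ 2 * stairBase N W := by
    intro m hm hmN
    have : (m : ℤ) * stairNoise N W ≤ N * stairNoise N W :=
      mul_le_mul_of_nonneg_right (by exact_mod_cast hmN) hB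
    linarith [(stairGap_bounds hf hp hm hmN).2]
  refine ⟨hzero, ?_, ?_, ?_⟩
  · refine monotoneOn_of_le_succ Set.ordConnected_Iic fun m _ hm hm1 => ?_
    rw [Order.succ_eq_add_one] at hm1 ⊢
    rw [Set.mem_Iic] at hm1
    rcases Nat.eq_zero_or_pos m with rfl | hm0
    · rw [hzero, zero_add]
      have := (stairGap_bounds hf hp le_rfl (by omega)).1
      push_cast at this
      linarith
    · have := (stairGap_bounds hf hp hm0 (by omega)).2
      have := (stairGap_bounds hf hp (by omega) hm1).1
      push_cast at *
      linarith
  · intro x y hxy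
    rcases Nat.eq_zero_or_pos x with rfl | hx
    · rw [hzero, zero_add, zero_add]
    rcases Nat.eq_zero_or_pos y with rfl | hy
    · rw [hzero, add_zero, add_zero]
    have := (stairGap_bounds hf hp hx (by omega)).1
    have := (stairGap_bounds hf hp hy (by omega)).1
    have := hupper (x + y) (by omega) hxy
    have : (0 : ℤ) ≤ (x - 1) * stairNoise N W := mul_nonneg (by simp; omega) hB
    have : (0 : ℤ) ≤ (y - 1) * stairNoise N W := mul_nonneg (by simp; omega) hB
    linarith
  · intro m hmN
    rcases Nat.eq_zero_or_pos m with rfl | hm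
    · rw [hzero]; positivity
    · linarith [hupper m hm hmN, Nat.cast_nonneg (α := ℤ) p]

end Construction

theorem exists_card_finSumset_eq (N W : ℕ) (hN : 0 < N) :
    ∃ (X : ℕ → ℤ) (κ : ℤ), 0 < κ ∧ ∀ (f : ℕ → ℕ) (p : ℕ), (∀ k < N, f k ≤ W) → p ≤ W →
      ∃ A : Finset ℤ, ∀ h, 1 ≤ h →
        (#(finSumset h A) : ℤ) = X h + if h < N then (f h : ℤ) else κ * p := by
  set R := stairBase N W
  set Q : ℤ := N * (2 * R + W) + 1
  refine ⟨fun h => 2 * R * triangle N + (N + 1) + (2 * (N + 1) * Q * h - (N + 1) * Q + 1) -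
    (if h < N then R * (N - h : ℕ) + stairNoise N W * (N - h : ℕ) ^ 2 else 0),
    triangle N, triangle_pos N hN, fun f p hf hp => ⟨staircase N Q (2 * R + p) (stairGap N W f p) 1,
    fun h hh => ?_⟩⟩
  have hγ := isStairProfile_stairGap hf hp
  have hQ : N * (2 * R + p) < Q := by
    have : (N : ℤ) * p ≤ N * W := mul_le_mul_of_nonneg_left (by exact_mod_cast hp) (by positivity)
    linarith
  rw [finSumset_eq_nsmul, hγ.nsmul_staircase_one hQ hh, hγ.card_staircase hQ hh]
  simp only [stairStep, sum_add_distrib, sum_sub_distrib, ← sum_mul, sum_stairGap, stairDeficit,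
    triangle, sum_const, card_range, Int.nsmul_eq_mul, Nat.cast_add, Nat.cast_one, mul_one]
  split_ifs <;> ring

theorem kravitz_general (n H : ℕ)
    (u : ℕ → ℕ → ℕ) (uinf : ℕ → ℕ) :
    ∃ A : ℕ → Finset ℤ,
      (∀ h, 1 ≤ h → h ≤ H → ∀ i, 1 ≤ i → i ≤ n → ∀ j, 1 ≤ j → j ≤ n →
        ((finSumset h (A i)).card ≤ (finSumset h (A j)).card ↔ u h i ≤ u h j)) ∧
      (∀ h, H < h → ∀ i, 1 ≤ i → i ≤ n → ∀ j, 1 ≤ j → j ≤ n →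
        ((finSumset h (A i)).card ≤ (finSumset h (A j)).card ↔ uinf i ≤ uinf j)) := by
  obtain ⟨W, hW⟩ := ((range (H + 1) ×ˢ range (n + 1)).image fun q => u q.1 q.2 + uinf q.2).exists_le
  have hbound : ∀ h ≤ H, ∀ i ≤ n, u h i + uinf i ≤ W := fun h hh i hi =>
    hW _ (mem_image.2 ⟨(h, i), mem_product.2 ⟨mem_range.2 (by omega), mem_range.2 (by omega)⟩, rfl⟩)
  obtain ⟨X, κ, hκ, hX⟩ := exists_card_finSumset_eq (H + 1) W H.succ_pos
  have : ∀ i ≤ n, ∃ A : Finset ℤ, ∀ h, 1 ≤ h →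
      (#(finSumset h A) : ℤ) = X h + if h < H + 1 then (u h i : ℤ) else κ * uinf i :=
    fun i hi => hX (fun h => u h i) (uinf i) (fun h hh => by linarith [hbound h (by omega) i hi])
      (by linarith [hbound 0 (Nat.zero_le H) i hi])
  choose! A hA using this
  refine ⟨A, fun h h1 hhH i _ hi j _ hj => ?_, fun h hHh i _ hi j _ hj => ?_⟩
  · rw [← Nat.cast_le (α := ℤ), hA i hi h h1, hA j hj h h1, if_pos (by omega), if_pos (by omega),
      add_le_add_iff_left, Nat.cast_le]
  · rw [← Nat.cast_le (α := ℤ), hA i hi h (by omega), hA j hj h (by omega), if_neg (by omega),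
      if_neg (by omega), add_le_add_iff_left, mul_le_mul_iff_right₀ hκ, Nat.cast_le]

/-- (Kravitz) For all integers `n ≥ 2` and `H ≥ 2` and all `n`-tuples
`u 1, …, u H, uinf` of positive integers, there exist finite subsets `A 1, …, A n` of
the integers such that for every `h ∈ {1,…,H}` and all `i, j ∈ {1,…,n}`,
`|hAᵢ| ≤ |hAⱼ| ↔ (u h) i ≤ (u h) j`, and for every integer `h > H` and all
`i, j ∈ {1,…,n}`, `|hAᵢ| ≤ |hAⱼ| ↔ uinf i ≤ uinf j`. -/
theorem kravitz (n H : ℕ) (hn : 2 ≤ n) (hH : 2 ≤ H)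
    (u : ℕ → ℕ → ℕ) (uinf : ℕ → ℕ)
    (hu : ∀ h, 1 ≤ h → h ≤ H → ∀ i, 1 ≤ i → i ≤ n → 0 < u h i)
    (huinf : ∀ i, 1 ≤ i → i ≤ n → 0 < uinf i) :
    ∃ A : ℕ → Finset ℤ,
      (∀ h, 1 ≤ h → h ≤ H → ∀ i, 1 ≤ i → i ≤ n → ∀ j, 1 ≤ j → j ≤ n →
        ((finSumset h (A i)).card ≤ (finSumset h (A j)).card ↔ u h i ≤ u h j)) ∧
      (∀ h, H < h → ∀ i, 1 ≤ i → i ≤ n → ∀ j, 1 ≤ j → j ≤ n →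
        ((finSumset h (A i)).card ≤ (finSumset h (A j)).card ↔ uinf i ≤ uinf j)) :=
  kravitz_general n H u uinf
end

section
/- For all integers n ≥ 2 and H ≥ 2, for any integers m_{i,h} given for all i = 1,…,n−1 and h = 1,…,H, and for every real number θ > 0, there exist Lebesgue-measurable sets of real numbers A_1,…,A_n such that μ(hA_i) − μ(hA_{i+1}) = θ·m_{i,h} for all i = 1,…,n−1 and h = 1,…,H. -/
open MeasureTheory

/-- The `h`-fold sumset of a subset `A` of `ℝ`:
`hA = {a₁ + ⋯ + a_h : aᵢ ∈ A}`. -/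
def sumset (h : ℕ) (A : Set ℝ) : Set ℝ :=
  {x | ∃ f : Fin h → ℝ, (∀ i, f i ∈ A) ∧ ∑ i, f i = x}

/-!
Let `block p k = [k p, k p + p] ∪ [0, p]`. If `S ⊆ [0, d]` contains `0` and `d`, `h d < p` and `t`
is large, then `h • (block p k ∪ (t + S))` is the disjoint union over `b ≤ h` of translates of
`b • block p k + (h - b) • S`. For `b ≥ 1` this piece is a union of intervals of length `b p`
spaced `k p` apart (a single interval once `b ≥ k`), each widened by exactly `(h - b) d`: an
interval of length at least `d` plus a set containing `0` and `d` inside `[0, d]` is an interval.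
Hence `μ(h • A) = μ(h • S) + blockCoeff k h * p + spanCoeff k h * d`.

Stacking blocks of shapes `k = 0, …, H` with fixed gaps gives sets with
`μ(h • A) = E_h + ∑ⱼ pⱼ * blockCoeff j h`, where `E_h` does not depend on the block lengths `pⱼ`
as long as these stay in fixed windows. The vectors `blockCoeff j` are triangular
(`blockCoeff (j + 1) h = blockCoeff j h` for `h ≤ j`, with a jump at `h = j + 1`), so perturbing
the lengths realises any prescribed differences of the measures `μ(h • Aᵢ)`.
-/

open Set Pointwise

lemma sumset_eq_nsmul (h : ℕ) (A : Set ℝ) : sumset h A = h • A := by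
  ext x
  exact mem_nsmul_iff_sum.symm

lemma IsCompact.nsmul {M : Type*} [AddMonoid M] [TopologicalSpace M] [ContinuousAdd M]
    {S : Set M} (hS : IsCompact S) : ∀ n : ℕ, IsCompact (n • S)
  | 0 => by simp
  | n + 1 => by rw [succ_nsmul]; exact (hS.nsmul n).add hS

namespace Set

lemma nsmul_union {M : Type*} [AddCommMonoid M] (X Y : Set M) (n : ℕ) :
    n • (X ∪ Y) = ⋃ b ∈ Finset.range (n + 1), b • X + (n - b) • Y := by
  refine Subset.antisymm ?_ (iUnion₂_subset fun b hb => ?_)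
  · induction n with
    | zero => simp
    | succ n ih =>
      rw [succ_nsmul]
      rintro _ ⟨u, hu, v, hv, rfl⟩
      obtain ⟨b, hb, x, hx, y, hy, rfl⟩ := mem_iUnion₂.1 (ih hu)
      rw [Finset.mem_range] at hb
      rcases hv with hv | hv
      · refine mem_iUnion₂.2 ⟨b + 1, by simp; omega, x + v, ?_, y, ?_, add_right_comm _ _ _⟩
        · rw [succ_nsmul]; exact add_mem_add hx hv
        · rwa [show n + 1 - (b + 1) = n - b by omega]
      · refine mem_iUnion₂.2 ⟨b, by simp; omega, x, hx, y + v, ?_, (add_assoc _ _ _).symm⟩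
        rw [show n + 1 - b = n - b + 1 by omega, succ_nsmul]; exact add_mem_add hy hv
  · have hbn : b + (n - b) = n := by rw [Finset.mem_range] at hb; omega
    calc b • X + (n - b) • Y ⊆ b • (X ∪ Y) + (n - b) • (X ∪ Y) :=
          add_subset_add (nsmul_subset_nsmul_left subset_union_left)
            (nsmul_subset_nsmul_left subset_union_right)
      _ = n • (X ∪ Y) := by rw [← add_nsmul, hbn]

lemma nsmul_union_singleton_add {M : Type*} [AddCommMonoid M] (X Y : Set M) (t : M) (h : ℕ) :
    h • (X ∪ ({t} + Y)) = ⋃ b ∈ Finset.range (h + 1), {(h - b) • t} + (b • X + (h - b) • Y) := by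
  rw [nsmul_union]
  refine iUnion₂_congr fun b _ => ?_
  rw [nsmul_add, nsmul_singleton, add_left_comm]

lemma nsmul_Icc {α : Type*} [AddCommMonoid α] [LinearOrder α] [IsOrderedAddMonoid α]
    [AddLeftReflectLE α] [ExistsAddOfLE α] {a b : α} (hab : a ≤ b) :
    ∀ n : ℕ, n • Icc a b = Icc (n • a) (n • b)
  | 0 => by simp [singleton_zero]
  | n + 1 => by
    rw [succ_nsmul, nsmul_Icc hab n, Icc_add_Icc (nsmul_le_nsmul_right hab n) hab,
      succ_nsmul, succ_nsmul]

end Set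

lemma volume_real_singleton_add (x : ℝ) (S : Set ℝ) : volume.real ({x} + S) = volume.real S := by
  rw [singleton_add, image_add_left, measureReal_def, measure_preimage_add, measureReal_def]

section Anchored

variable {S : Set ℝ} {d : ℝ}

lemma Icc_add_eq_of_subset_Icc (h0 : 0 ∈ S) (hd : d ∈ S) (hS : S ⊆ Icc 0 d) {a a' : ℝ}
    (had : a + d ≤ a') : Icc a a' + S = Icc a (a' + d) := by
  refine Subset.antisymm ?_ fun x hx => ?_
  · rintro _ ⟨u, hu, s, hs, rfl⟩
    exact ⟨by linarith [hu.1, (hS hs).1], by linarith [hu.2, (hS hs).2]⟩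
  · by_cases hxa : x ≤ a'
    · exact ⟨x, ⟨hx.1, hxa⟩, 0, h0, add_zero x⟩
    · exact ⟨x - d, ⟨by linarith, by linarith [hx.2]⟩, d, hd, sub_add_cancel x d⟩

lemma Icc_add_nsmul_eq_of_subset_Icc (h0 : 0 ∈ S) (hd : d ∈ S) (hS : S ⊆ Icc 0 d) {a a' : ℝ}
    (had : a + d ≤ a') : ∀ c : ℕ, Icc a a' + c • S = Icc a (a' + c * d)
  | 0 => by simp
  | c + 1 => by
    have hd0 : 0 ≤ d := (hS hd).1
    rw [succ_nsmul, ← add_assoc, Icc_add_nsmul_eq_of_subset_Icc h0 hd hS had c,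
      Icc_add_eq_of_subset_Icc h0 hd hS (by nlinarith [(Nat.cast_nonneg c : (0 : ℝ) ≤ c)])]
    push_cast
    ring_nf

end Anchored

lemma iUnion_Icc_eq_Icc {g W : ℝ} (hg : 0 ≤ g) (hgW : g ≤ W) :
    ∀ b : ℕ, ⋃ s ∈ Finset.range (b + 1), Icc (s * g) (s * g + W) = Icc 0 (b * g + W)
  | 0 => by simp
  | b + 1 => by
    rw [Finset.range_add_one, Finset.set_biUnion_insert, iUnion_Icc_eq_Icc hg hgW b]
    push_cast
    refine Subset.antisymm (union_subset ?_ ?_) fun x hx => ?_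
    · exact Icc_subset_Icc (by positivity) le_rfl
    · exact Icc_subset_Icc le_rfl (by linarith)
    · by_cases hxb : x ≤ b * g + W
      · exact Or.inr ⟨hx.1, hxb⟩
      · exact Or.inl ⟨by linarith, hx.2⟩

lemma volume_real_iUnion_Icc {g W : ℝ} (hW : 0 ≤ W) (hWg : W < g) (b : ℕ) :
    volume.real (⋃ s ∈ Finset.range (b + 1), Icc (s * g) (s * g + W)) = (b + 1) * W := by
  rw [measureReal_biUnion_finset ?_ (fun _ _ => measurableSet_Icc)
    fun _ _ => measure_Icc_lt_top.ne]
  · simp [hW]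
  · refine Pairwise.set_pairwise (fun s s' hss' => ?_) _
    wlog hlt : s < s' generalizing s s'
    · exact (this s' s (Ne.symm hss') (by omega)).symm
    have : (s + 1 : ℝ) ≤ s' := by exact_mod_cast hlt
    refine disjoint_left.2 fun x hx hx' => ?_
    nlinarith [hx.2, hx'.1]

def block (p : ℝ) (k : ℕ) : Set ℝ := Icc (k * p) (k * p + p) ∪ Icc 0 p

def blockComponents (k b : ℕ) : ℕ := if b < k then b + 1 else 1

section Block

variable {p : ℝ} {k : ℕ}

lemma block_subset_Icc (hp : 0 ≤ p) : block p k ⊆ Icc 0 ((k + 1) * p) :=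
  union_subset (Icc_subset_Icc (by positivity) (by linarith)) (Icc_subset_Icc le_rfl (by nlinarith))

lemma nsmul_block (hp : 0 ≤ p) (b : ℕ) :
    b • block p k = ⋃ s ∈ Finset.range (b + 1), Icc (s * (k * p)) (s * (k * p) + b * p) := by
  rw [block, nsmul_union]
  refine iUnion₂_congr fun s hs => ?_
  rw [Finset.mem_range] at hs
  rw [nsmul_Icc (by linarith), nsmul_Icc hp,
    Icc_add_Icc (by simp; positivity) (by simp; positivity)]
  simp only [nsmul_eq_mul, Nat.cast_sub (by omega : s ≤ b), mul_zero, add_zero]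
  ring_nf

lemma volume_real_nsmul_block_add_nsmul {S : Set ℝ} {d : ℝ} (h0 : 0 ∈ S) (hd : d ∈ S)
    (hS : S ⊆ Icc 0 d) {b c : ℕ} (hb : 1 ≤ b) (hdp : d ≤ p) (hcd : c * d < p) :
    volume.real (b • block p k + c • S)
      = (b * (min b k + 1) : ℕ) * p + blockComponents k b * (c * d) := by
  have hd0 : 0 ≤ d := (hS hd).1
  have hb' : (1 : ℝ) ≤ b := by exact_mod_cast hb
  have hc0 : 0 ≤ (c : ℝ) * d := by positivity
  have hbp : 0 ≤ (b : ℝ) * p := by nlinarith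
  rw [nsmul_block (by linarith), iUnion₂_add]
  rw [iUnion₂_congr fun s _ => Icc_add_nsmul_eq_of_subset_Icc h0 hd hS (by nlinarith) c]
  simp_rw [add_assoc]
  unfold blockComponents
  split_ifs with hbk
  · have hbk' : (b + 1 : ℝ) ≤ k := by exact_mod_cast hbk
    rw [volume_real_iUnion_Icc (by linarith) (by nlinarith), min_eq_left hbk.le]
    push_cast
    ring
  · have hkb : (k : ℝ) ≤ b := by exact_mod_cast not_lt.1 hbk
    rw [iUnion_Icc_eq_Icc (by nlinarith) (by nlinarith), Real.volume_real_Icc_of_le (by nlinarith),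
      min_eq_right (not_lt.1 hbk)]
    push_cast
    ring

end Block

lemma nsmul_block_add_nsmul_subset {S : Set ℝ} {p d : ℝ} {k : ℕ} (hp : 0 ≤ p) (hd : 0 ≤ d)
    (hS : S ⊆ Icc 0 d) (b c : ℕ) :
    b • block p k + c • S ⊆ Icc 0 (b * ((k + 1) * p) + c * d) := by
  have hkp : 0 ≤ (k + 1) * p := mul_nonneg (by positivity) hp
  have hsub := add_subset_add (nsmul_subset_nsmul_left (n := b) (block_subset_Icc hp (k := k)))
    (nsmul_subset_nsmul_left (n := c) hS)
  rwa [nsmul_Icc hkp, nsmul_Icc hd,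
    Icc_add_Icc (nsmul_le_nsmul_right hkp b) (nsmul_le_nsmul_right hd c),
    nsmul_zero, nsmul_zero, add_zero, nsmul_eq_mul, nsmul_eq_mul] at hsub

lemma disjoint_singleton_nsmul_add {P Q : Set ℝ} {w t : ℝ} (hP : P ⊆ Icc 0 w) (hQ : Q ⊆ Icc 0 w)
    (hwt : w < t) {i j : ℕ} (hij : i ≠ j) : Disjoint ({i • t} + P) ({j • t} + Q) := by
  wlog hlt : i < j generalizing P Q i j
  · exact (this hQ hP (Ne.symm hij) (by omega)).symm
  have hij' : (i + 1 : ℝ) ≤ j := by exact_mod_cast hlt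
  refine disjoint_left.2 ?_
  rintro _ ⟨_, rfl, u, hu, rfl⟩ ⟨_, rfl, v, hv, hx⟩
  have hu' := hP hu
  have hv' := hQ hv
  simp only [nsmul_eq_mul] at hx
  nlinarith [hu'.1, hu'.2, hv'.1]

def blockCoeff (k h : ℕ) : ℕ := ∑ b ∈ Finset.range h, (b + 1) * (min (b + 1) k + 1)

def spanCoeff (k h : ℕ) : ℕ := ∑ b ∈ Finset.range h, blockComponents k (b + 1) * (h - (b + 1))

lemma volume_real_nsmul_block_union {S : Set ℝ} {p d t : ℝ} {k h : ℕ} (hSc : IsCompact S)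
    (h0 : 0 ∈ S) (hd : d ∈ S) (hS : S ⊆ Icc 0 d) (hdp : h * d < p)
    (ht : h * ((k + 1) * p + d) < t) :
    volume.real (h • (block p k ∪ ({t} + S)))
      = volume.real (h • S) + blockCoeff k h * p + spanCoeff k h * d := by
  have hd0 : 0 ≤ d := (hS hd).1
  have hp0 : 0 ≤ p := by nlinarith [(Nat.cast_nonneg h : (0 : ℝ) ≤ h)]
  set P : ℕ → Set ℝ := fun b => b • block p k + (h - b) • S with hP
  have hPc (b : ℕ) : IsCompact ({(h - b) • t} + P b) :=
    isCompact_singleton.add (((isCompact_Icc.union isCompact_Icc).nsmul b).add (hSc.nsmul _))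
  have hPsub (b : ℕ) (hb : b ≤ h) : P b ⊆ Icc 0 (h * ((k + 1) * p + d)) := by
    refine (nsmul_block_add_nsmul_subset hp0 hd0 hS b (h - b)).trans (Icc_subset_Icc le_rfl ?_)
    have hbh : (b : ℝ) ≤ h := by exact_mod_cast hb
    rw [Nat.cast_sub hb]
    nlinarith [mul_nonneg (sub_nonneg.2 hbh) (mul_nonneg (by positivity : (0 : ℝ) ≤ k + 1) hp0),
      mul_nonneg (Nat.cast_nonneg b : (0 : ℝ) ≤ b) hd0]
  rw [nsmul_union_singleton_add, measureReal_biUnion_finset ?_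
    (fun b _ => (hPc b).isClosed.measurableSet) fun b _ => (hPc b).measure_lt_top.ne]
  · simp_rw [volume_real_singleton_add]
    rw [Finset.sum_range_succ', add_comm]
    have hP0 : P 0 = h • S := by simp [hP]
    have hPsucc : ∀ b ∈ Finset.range h, volume.real (P (b + 1))
        = ((b + 1) * (min (b + 1) k + 1) : ℕ) * p
          + blockComponents k (b + 1) * ((h - (b + 1) : ℕ) * d) := by
      intro b hb
      rw [Finset.mem_range] at hb
      have hhb : ((h - (b + 1) : ℕ) : ℝ) ≤ h := by exact_mod_cast Nat.sub_le h (b + 1)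
      have hh1 : (1 : ℝ) ≤ h := by exact_mod_cast (by omega : 1 ≤ h)
      exact volume_real_nsmul_block_add_nsmul h0 hd hS (by omega) (by nlinarith) (by nlinarith)
    rw [hP0, Finset.sum_congr rfl hPsucc, Finset.sum_add_distrib, add_assoc, blockCoeff, spanCoeff]
    push_cast
    rw [Finset.sum_mul, Finset.sum_mul]
    simp_rw [mul_assoc]
  · intro b hb b' hb' hbb'
    simp only [Finset.coe_range, mem_Iio] at hb hb'
    exact disjoint_singleton_nsmul_add (hPsub b (by omega)) (hPsub b' (by omega)) (by linarith)
      (by omega)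

def tower (p : ℕ → ℝ) (k : ℕ → ℕ) (t : ℕ → ℝ) : ℕ → Set ℝ
  | 0 => {0}
  | r + 1 => block (p r) (k r) ∪ ({t r} + tower p k t r)

section Tower

variable {p t : ℕ → ℝ} {k : ℕ → ℕ}

lemma isCompact_tower : ∀ r, IsCompact (tower p k t r)
  | 0 => isCompact_singleton
  | r + 1 => (isCompact_Icc.union isCompact_Icc).union (isCompact_singleton.add (isCompact_tower r))

lemma sum_mem_tower : ∀ r, ∑ j ∈ Finset.range r, t j ∈ tower p k t r
  | 0 => by simp [tower]
  | r + 1 => by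
    rw [Finset.sum_range_succ, add_comm _ (t r)]
    exact Or.inr (add_mem_add (mem_singleton _) (sum_mem_tower r))

lemma zero_mem_tower {r : ℕ} (hp : ∀ j < r, 0 ≤ p j) : 0 ∈ tower p k t r := by
  cases r with
  | zero => rfl
  | succ r => exact Or.inl (Or.inr ⟨le_rfl, hp r r.lt_add_one⟩)

lemma tower_subset_Icc {r : ℕ} (hp : ∀ j < r, 0 ≤ p j) (ht : ∀ j < r, (k j + 1) * p j ≤ t j) :
    tower p k t r ⊆ Icc 0 (∑ j ∈ Finset.range r, t j) := by
  induction r with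
  | zero => simp [tower]
  | succ r ih =>
    have ih := ih (fun j hj => hp j (by omega)) (fun j hj => ht j (by omega))
    have hD : 0 ≤ ∑ j ∈ Finset.range r, t j := (ih (sum_mem_tower r)).1
    have hpr := hp r r.lt_add_one
    have htr : (k r + 1) * p r ≤ t r := ht r r.lt_add_one
    have htr0 : 0 ≤ t r := le_trans (mul_nonneg (by positivity) hpr) htr
    rw [Finset.sum_range_succ]
    refine union_subset ((block_subset_Icc hpr).trans (Icc_subset_Icc le_rfl (by linarith))) ?_
    rintro _ ⟨_, rfl, x, hx, rfl⟩
    exact ⟨by linarith [(ih hx).1], by linarith [(ih hx).2]⟩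

lemma volume_real_nsmul_tower {h r : ℕ} (hp : ∀ j < r, 0 ≤ p j)
    (ht : ∀ j < r, (k j + 1) * p j ≤ t j)
    (hpD : ∀ j < r, h * ∑ i ∈ Finset.range j, t i < p j)
    (htD : ∀ j < r, h * ((k j + 1) * p j + ∑ i ∈ Finset.range j, t i) < t j) :
    volume.real (h • tower p k t r) = ∑ j ∈ Finset.range r,
      (blockCoeff (k j) h * p j + spanCoeff (k j) h * ∑ i ∈ Finset.range j, t i) := by
  induction r with
  | zero => simp [tower, measureReal_def]
  | succ r ih =>
    have hp' (j) (hj : j < r) := hp j (by omega)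
    have ht' (j) (hj : j < r) := ht j (by omega)
    rw [tower, volume_real_nsmul_block_union (isCompact_tower r) (zero_mem_tower hp')
      (sum_mem_tower r) (tower_subset_Icc hp' ht') (hpD r r.lt_add_one) (htD r r.lt_add_one),
      ih hp' ht' (fun j hj => hpD j (by omega)) (fun j hj => htD j (by omega)),
      Finset.sum_range_succ, add_assoc]

end Tower

/- Block `j` of `perturbedTower H c q` has length `(H + 1) Dⱼ + c + 1 + qⱼ`, where `Dⱼ` is the
span of the blocks below it; for `|qⱼ| ≤ c` this lies in `[(H + 1) Dⱼ + 1, (H + 1) Dⱼ + 2c + 1]`,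
and `towerGap` exceeds `H` times the span of block `j` on top of `Dⱼ` for every such length. -/
def towerGap (H : ℕ) (c D : ℝ) (j : ℕ) : ℝ :=
  (H + 1) * ((j + 1) * ((H + 1) * D + 2 * c + 1) + D) + 1

def perturbedSpan (H : ℕ) (c : ℝ) : ℕ → ℝ
  | 0 => 0
  | j + 1 => perturbedSpan H c j + towerGap H c (perturbedSpan H c j) j

def perturbedTower (H : ℕ) (c : ℝ) (q : ℕ → ℝ) : Set ℝ :=
  tower (fun j => (H + 1) * perturbedSpan H c j + c + 1 + q j) id
    (fun j => towerGap H c (perturbedSpan H c j) j) (H + 1)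

section PerturbedTower

variable {H : ℕ} {c : ℝ}

lemma isCompact_perturbedTower (q : ℕ → ℝ) : IsCompact (perturbedTower H c q) :=
  isCompact_tower _

lemma sum_towerGap_eq_perturbedSpan :
    ∀ r, ∑ j ∈ Finset.range r, towerGap H c (perturbedSpan H c j) j = perturbedSpan H c r
  | 0 => rfl
  | r + 1 => by rw [Finset.sum_range_succ, sum_towerGap_eq_perturbedSpan r, perturbedSpan]

lemma perturbedSpan_nonneg (hc : 0 ≤ c) : ∀ j, 0 ≤ perturbedSpan H c j
  | 0 => le_rfl
  | j + 1 => by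
    have := perturbedSpan_nonneg hc j
    rw [perturbedSpan, towerGap]
    positivity

lemma volume_real_nsmul_perturbedTower {q : ℕ → ℝ} (hq : ∀ j ≤ H, |q j| ≤ c) {h : ℕ}
    (hh : h ≤ H) :
    volume.real (h • perturbedTower H c q) = ∑ j ∈ Finset.range (H + 1),
      (blockCoeff j h * ((H + 1) * perturbedSpan H c j + c + 1 + q j)
        + spanCoeff j h * perturbedSpan H c j) := by
  have hc : 0 ≤ c := (abs_nonneg _).trans (hq 0 (Nat.zero_le H))
  have hh' : (h : ℝ) ≤ H := by exact_mod_cast hh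
  have hD := perturbedSpan_nonneg (H := H) hc
  rw [perturbedTower, volume_real_nsmul_tower]
  · simp_rw [sum_towerGap_eq_perturbedSpan, id]
  · intro j hj
    have := abs_le.1 (hq j (by omega))
    have := mul_nonneg (by positivity : (0 : ℝ) ≤ H + 1) (hD j)
    linarith
  all_goals
    intro j hj
    simp only [↓sum_towerGap_eq_perturbedSpan, towerGap, id]
    have hqj := abs_le.1 (hq j (by omega))
    have hDj := hD j
    set D := perturbedSpan H c j
    have hHD : 0 ≤ (H + 1 : ℝ) * D := by positivity
    have hpP : (j + 1 : ℝ) * ((H + 1) * D + c + 1 + q j) ≤ (j + 1) * ((H + 1) * D + 2 * c + 1) :=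
      mul_le_mul_of_nonneg_left (by linarith) (by positivity)
    have hP : 0 ≤ (j + 1 : ℝ) * ((H + 1) * D + c + 1 + q j) :=
      mul_nonneg (by positivity) (by linarith)
  · nlinarith
  · nlinarith
  · calc _ ≤ (H : ℝ) * ((j + 1) * ((H + 1) * D + 2 * c + 1) + D) :=
          mul_le_mul hh' (by linarith) (by linarith) (by positivity)
      _ < _ := by nlinarith

lemma volume_real_nsmul_perturbedTower_sub {q q' : ℕ → ℝ} (hq : ∀ j ≤ H, |q j| ≤ c)
    (hq' : ∀ j ≤ H, |q' j| ≤ c) {h : ℕ} (hh : h ≤ H) :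
    volume.real (h • perturbedTower H c q) - volume.real (h • perturbedTower H c q')
      = ∑ j ∈ Finset.range (H + 1), (q j - q' j) * blockCoeff j h := by
  rw [volume_real_nsmul_perturbedTower hq hh, volume_real_nsmul_perturbedTower hq' hh,
    ← Finset.sum_sub_distrib]
  exact Finset.sum_congr rfl fun j _ => by ring

end PerturbedTower

lemma blockCoeff_succ_of_le {k h : ℕ} (hhk : h ≤ k) : blockCoeff (k + 1) h = blockCoeff k h :=
  Finset.sum_congr rfl fun b hb => by
    rw [Finset.mem_range] at hb
    rw [min_eq_left (by omega : b + 1 ≤ k + 1), min_eq_left (by omega : b + 1 ≤ k)]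

lemma blockCoeff_succ_self (k : ℕ) :
    blockCoeff (k + 1) (k + 1) = blockCoeff k (k + 1) + (k + 1) := by
  rw [blockCoeff, Finset.sum_range_succ, ← blockCoeff, blockCoeff_succ_of_le le_rfl, blockCoeff,
    blockCoeff, Finset.sum_range_succ, min_self, min_eq_right (Nat.le_succ k)]
  ring

lemma exists_sum_mul_eq_of_triangular (v : ℕ → ℕ → ℝ) (hv : ∀ k h, h ≤ k → v (k + 1) h = v k h)
    (hdiag : ∀ k, v (k + 1) (k + 1) ≠ v k (k + 1)) (τ : ℕ → ℝ) :
    ∀ N, ∃ y : ℕ → ℝ, ∀ h, 1 ≤ h → h ≤ N → ∑ k ∈ Finset.range (N + 1), y k * v k h = τ h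
  | 0 => ⟨0, fun h h1 h0 => by omega⟩
  | N + 1 => by
    obtain ⟨y, hy⟩ := exists_sum_mul_eq_of_triangular v hv hdiag τ N
    set z := (τ (N + 1) - ∑ k ∈ Finset.range (N + 1), y k * v k (N + 1))
      / (v (N + 1) (N + 1) - v N (N + 1))
    have hz : z * (v (N + 1) (N + 1) - v N (N + 1))
        = τ (N + 1) - ∑ k ∈ Finset.range (N + 1), y k * v k (N + 1) :=
      div_mul_cancel₀ _ (sub_ne_zero.2 (hdiag N))
    -- move weight `z` from `v N` to `v (N + 1)`, which agrees with `v N` on the first `N` rows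
    refine ⟨Function.update (Function.update y N (y N - z)) (N + 1) z, fun h h1 hh => ?_⟩
    have hsum : ∑ k ∈ Finset.range (N + 2),
        Function.update (Function.update y N (y N - z)) (N + 1) z k * v k h
          = ∑ k ∈ Finset.range (N + 1), y k * v k h + z * (v (N + 1) h - v N h) := by
      simp only [Finset.sum_range_succ, Function.update_self,
        Function.update_of_ne (by omega : N ≠ N + 1)]
      rw [Finset.sum_congr rfl fun k hk => by
        rw [Function.update_of_ne (by simp at hk; omega),
          Function.update_of_ne (by simp at hk; omega)]]
      ring
    rw [hsum]
    rcases Nat.lt_or_ge h (N + 1) with hlt | hge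
    · rw [hy h h1 (by omega), hv N h (by omega), sub_self, mul_zero, add_zero]
    · rw [show h = N + 1 by omega, hz]
      ring

theorem measure_differences_real_general (n H : ℕ)
    (m : ℕ → ℕ → ℤ) (θ : ℝ) :
    ∃ A : ℕ → Set ℝ,
      (∀ i, 1 ≤ i → i ≤ n → MeasurableSet (A i)) ∧
      (∀ i, 1 ≤ i → i ≤ n → ∀ h, 1 ≤ h → h ≤ H →
        MeasurableSet (sumset h (A i)) ∧ volume (sumset h (A i)) < ⊤) ∧
      (∀ i, 1 ≤ i → i ≤ n - 1 → ∀ h, 1 ≤ h → h ≤ H →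
        (volume (sumset h (A i))).toReal - (volume (sumset h (A (i + 1)))).toReal
          = θ * m i h) := by
  set τ : ℕ → ℕ → ℝ := fun i h => ∑ i' ∈ Finset.Ico i n, (m i' h : ℝ)
  choose y hy using fun i => exists_sum_mul_eq_of_triangular (fun k h => (blockCoeff k h : ℝ))
    (fun k h hhk => by rw [blockCoeff_succ_of_le hhk])
    (fun k => by rw [blockCoeff_succ_self]; push_cast; linarith) (τ i) H
  obtain ⟨c, hc⟩ := ((Finset.range (n + 1) ×ˢ Finset.range (H + 1)).image
    fun ij => |θ * y ij.1 ij.2|).exists_le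
  have hbound (i) (hi : i ≤ n) (j) (hj : j ≤ H) : |θ * y i j| ≤ c :=
    hc _ (Finset.mem_image_of_mem _ (a := (i, j)) (by simp; omega))
  refine ⟨fun i => perturbedTower H c (θ * y i ·),
    fun i _ _ => (isCompact_perturbedTower _).isClosed.measurableSet, fun i _ _ h _ _ => ?_,
    fun i _ hin h h1 hh => ?_⟩
  · rw [sumset_eq_nsmul]
    have hcpt := (isCompact_perturbedTower (H := H) (c := c) (θ * y i ·)).nsmul h
    exact ⟨hcpt.isClosed.measurableSet, hcpt.measure_lt_top⟩
  · rw [sumset_eq_nsmul, sumset_eq_nsmul, ← measureReal_def, ← measureReal_def,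
      volume_real_nsmul_perturbedTower_sub (hbound i (by omega)) (hbound (i + 1) (by omega)) hh]
    simp_rw [← mul_sub, mul_assoc, ← Finset.mul_sum, sub_mul, Finset.sum_sub_distrib]
    rw [hy i h h1 hh, hy (i + 1) h h1 hh]
    simp only [τ, Finset.sum_eq_sum_Ico_succ_bot (by omega : i < n), add_sub_cancel_right]

/-- For all integers `n ≥ 2` and `H ≥ 2`, for any integers `m i h` given for all
`i = 1,…,n−1` and `h = 1,…,H`, and for every real number `θ > 0`, there exist
Lebesgue-measurable sets of real numbers `A 1, …, A n` such that all the sumsets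
`hAᵢ` (for `1 ≤ h ≤ H`) are Lebesgue measurable with finite measure and
`μ(hAᵢ) − μ(hA_{i+1}) = θ * m i h` for all `i = 1,…,n−1` and `h = 1,…,H`. -/
theorem measure_differences_real (n H : ℕ) (hn : 2 ≤ n) (hH : 2 ≤ H)
    (m : ℕ → ℕ → ℤ) (θ : ℝ) (hθ : 0 < θ) :
    ∃ A : ℕ → Set ℝ,
      (∀ i, 1 ≤ i → i ≤ n → MeasurableSet (A i)) ∧
      (∀ i, 1 ≤ i → i ≤ n → ∀ h, 1 ≤ h → h ≤ H →
        MeasurableSet (sumset h (A i)) ∧ volume (sumset h (A i)) < ⊤) ∧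
      (∀ i, 1 ≤ i → i ≤ n - 1 → ∀ h, 1 ≤ h → h ≤ H →
        (volume (sumset h (A i))).toReal - (volume (sumset h (A (i + 1)))).toReal
          = θ * m i h) :=
  measure_differences_real_general n H m θ
end

section
/- Let H ≥ 2 and n ≥ 2 be integers, and for each i = 1,…,n and j = 1,…,H let ℓ_{i,j} be a nonnegative integer such that L_{i,H} = Σ_{j=1}^{H} ℓ_{i,j} > 0 for every i. Let ε, δ, c be real numbers with 0 < ε < 1/3, 0 < δ < min over i of { ε/(H−1), (1−3ε)/(2H·L_{i,H}) }, and (H−1)δ + 3 < c. Let X = [0, 1−ε] ∪ [2, 3−ε]. Then the interval [1+ε, 2−2ε] contains nonempty Lebesgue-measurable sets Y_1,…,Y_n such that the sets A_i = [0, δ] ∪ (c + (X ∪ Y_i)) satisfy μ(hA_i) − μ(hA_{i+1}) = δ·Σ_{r=h}^{H} (r−h+1)·(ℓ_{i+1,r} − ℓ_{i,r}) for all i = 1,…,n−1 and all h = 1,…,H. -/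
open MeasureTheory Pointwise

/-!
`Y i` is `[1 + ε, 2 - 2ε]` with, for every `r ≤ H`, `ℓ i r` open gaps of length `r δ` removed,
the gaps sitting in disjoint slots. Split `h A_i` according to the number `m` of summands taken
from `c + (X ∪ Y i)`. For `m ≥ 2` the piece does not see `Y i`, because already
`m (X ∪ Y i) = [0, m (3 - ε)]`; the piece `m = 1` is `c + (X ∪ Y i) + [0, (h - 1) δ]`, and the
bound on `c` keeps it disjoint from the others. Thickening by `[0, (h - 1) δ]` shrinks every gap
by `(h - 1) δ`, so exactly the gaps with `r ≥ h` survive, with lengths `(r - h + 1) δ`, and they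
account for the whole difference of measures.
-/

open Set

lemma sumset_zero (A : Set ℝ) : sumset 0 A = {0} := by
  ext x
  simp [sumset, eq_comm]

lemma sumset_succ (m : ℕ) (A : Set ℝ) : sumset (m + 1) A = sumset m A + A := by
  ext x
  constructor
  · rintro ⟨f, hf, rfl⟩
    rw [Fin.sum_univ_castSucc]
    exact add_mem_add ⟨_, fun i => hf _, rfl⟩ (hf _)
  · rintro ⟨_, ⟨f, hf, rfl⟩, a, ha, rfl⟩
    refine ⟨Fin.snoc f a, Fin.lastCases (by simpa using ha) (by simpa using hf), ?_⟩
    simp [Fin.sum_univ_castSucc]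

lemma sumset_one (A : Set ℝ) : sumset 1 A = A := by
  simp [sumset_succ, sumset_zero]

lemma sumset_add (a b : ℕ) (A : Set ℝ) : sumset (a + b) A = sumset a A + sumset b A := by
  induction b with
  | zero => simp [sumset_zero]
  | succ b ih => rw [← add_assoc, sumset_succ, ih, sumset_succ, add_assoc]

lemma sumset_mono {A B : Set ℝ} (h : A ⊆ B) (m : ℕ) : sumset m A ⊆ sumset m B := by
  rintro x ⟨f, hf, rfl⟩
  exact ⟨f, fun i => h (hf i), rfl⟩

lemma IsCompact.sumset {A : Set ℝ} (hA : IsCompact A) (m : ℕ) : IsCompact (sumset m A) := by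
  induction m with
  | zero => exact (sumset_zero A).symm ▸ isCompact_singleton
  | succ m ih => exact (sumset_succ m A).symm ▸ ih.add hA

lemma sum_mem_sumset {ι : Type*} (s : Finset ι) (f : ι → ℝ) {A : Set ℝ}
    (hf : ∀ i ∈ s, f i ∈ A) : ∑ i ∈ s, f i ∈ sumset s.card A := by
  classical
  induction s using Finset.cons_induction with
  | empty => simp [sumset_zero]
  | cons a s ha ih =>
    rw [Finset.sum_cons, Finset.card_cons, sumset_succ, add_comm (f a)]
    exact add_mem_add (ih fun i hi => hf i (Finset.mem_cons_of_mem hi)) (hf a (by simp))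

lemma sumset_union (h : ℕ) (U V : Set ℝ) :
    sumset h (U ∪ V) = ⋃ m ∈ Finset.range (h + 1), sumset (h - m) U + sumset m V := by
  classical
  refine subset_antisymm ?_ (iUnion₂_subset fun m hm => ?_)
  · rintro x ⟨f, hf, rfl⟩
    set T := Finset.univ.filter fun i => f i ∈ V
    refine mem_biUnion (x := T.card) (Finset.mem_range.2 (Nat.lt_succ_of_le ?_)) ?_
    · exact (Finset.card_le_univ T).trans_eq (Fintype.card_fin h)
    rw [← Finset.sum_compl_add_sum T]
    refine add_mem_add ?_ (sum_mem_sumset T f fun i hi => (Finset.mem_filter.1 hi).2)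
    convert sum_mem_sumset Tᶜ f fun i hi => ?_
    · rw [Finset.card_compl, Fintype.card_fin]
    exact (hf i).resolve_right fun hV => Finset.mem_compl.1 hi (by simpa [T] using hV)
  · have hmh : h - m + m = h := Nat.sub_add_cancel (Nat.lt_succ_iff.1 (Finset.mem_range.1 hm))
    calc sumset (h - m) U + sumset m V
        ⊆ sumset (h - m) (U ∪ V) + sumset m (U ∪ V) :=
          add_subset_add (sumset_mono subset_union_left _) (sumset_mono subset_union_right _)
      _ = sumset h (U ∪ V) := by rw [← sumset_add, hmh]

lemma sumset_subset_Ici {A : Set ℝ} {t : ℝ} (hA : A ⊆ Ici t) (m : ℕ) :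
    sumset m A ⊆ Ici (m * t) := by
  rintro x ⟨f, hf, rfl⟩
  simpa using Finset.card_nsmul_le_sum Finset.univ f t fun i _ => hA (hf i)

lemma sumset_add_distrib (m : ℕ) (S T : Set ℝ) :
    sumset m (S + T) = sumset m S + sumset m T := by
  induction m with
  | zero => simp [sumset_zero]
  | succ m ih => rw [sumset_succ, sumset_succ, sumset_succ, ih, add_add_add_comm]

lemma sumset_singleton (m : ℕ) (c : ℝ) : sumset m {c} = {m * c} := by
  induction m with
  | zero => simp [sumset_zero]
  | succ m ih => simp [sumset_succ, ih, add_mul]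

lemma sumset_image_const_add (m : ℕ) (c : ℝ) (B : Set ℝ) :
    sumset m ((c + ·) '' B) = (m * c + ·) '' sumset m B := by
  rw [← singleton_add, sumset_add_distrib, sumset_singleton, singleton_add]

lemma sumset_Icc (m : ℕ) {p q : ℝ} (hpq : p ≤ q) : sumset m (Icc p q) = Icc (m * p) (m * q) := by
  induction m with
  | zero => simp [sumset_zero]
  | succ m ih =>
    rw [sumset_succ, ih, Icc_add_Icc (by gcongr) hpq]
    push_cast
    ring_nf

lemma measureReal_image_const_add (c : ℝ) (S : Set ℝ) :
    volume.real ((c + ·) '' S) = volume.real S := by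
  simp only [Measure.real, image_add_left, measure_preimage_add]

section Decomposition

variable {h : ℕ} {δ c : ℝ}

lemma sumset_Icc_union_image_add (hh : 1 ≤ h) (hδ : 0 ≤ δ) (B : Set ℝ) :
    sumset h (Icc 0 δ ∪ (c + ·) '' B) = (c + ·) '' (B + Icc 0 ((h - 1) * δ)) ∪
      ⋃ m ∈ (Finset.range (h + 1)).erase 1, sumset (h - m) (Icc 0 δ) + sumset m ((c + ·) '' B) := by
  conv_lhs => rw [sumset_union, ← Finset.insert_erase (Finset.mem_range.2 (by omega : 1 < h + 1))]
  rw [Finset.set_biUnion_insert, sumset_one, sumset_Icc _ hδ, mul_zero, Nat.cast_sub hh,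
    Nat.cast_one, ← singleton_add, ← singleton_add, add_comm, add_assoc]

lemma biUnion_sumset_Icc_add_sumset_image_subset (hδ : 0 ≤ δ) (hc : 0 ≤ c) {B : Set ℝ}
    (hB : B ⊆ Ici 0) :
    ⋃ m ∈ (Finset.range (h + 1)).erase 1, sumset (h - m) (Icc 0 δ) + sumset m ((c + ·) '' B)
      ⊆ Icc 0 (h * δ) ∪ Ici (2 * c) := by
  refine iUnion₂_subset fun m hm => ?_
  obtain rfl | hm2 : m = 0 ∨ 2 ≤ m := by
    have := (Finset.mem_erase.1 hm).1
    omega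
  · simp [sumset_zero, sumset_Icc _ hδ]
  rintro _ ⟨y, hy, z, hz, rfl⟩
  have hy0 : 0 ≤ y := by
    simpa using sumset_subset_Ici (t := 0) Icc_subset_Ici_self _ hy
  have hzc : m * c ≤ z := sumset_subset_Ici (t := c) (by
    rintro _ ⟨b, hb, rfl⟩
    simpa using hB hb) _ hz
  have : 2 * c ≤ m * c := by gcongr; exact_mod_cast hm2
  exact Or.inr (by simp only [mem_Ici]; linarith)

lemma measureReal_sumset_Icc_union_image_add (hh : 1 ≤ h) (hδ : 0 ≤ δ) (hhδ : h * δ < c)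
    {M : ℝ} (hMc : M + (h - 1) * δ < c) {B : Set ℝ} (hB : IsCompact B) (hBM : B ⊆ Icc 0 M) :
    volume.real (sumset h (Icc 0 δ ∪ (c + ·) '' B)) = volume.real (B + Icc 0 ((h - 1) * δ)) +
      volume.real (⋃ m ∈ (Finset.range (h + 1)).erase 1,
        sumset (h - m) (Icc 0 δ) + sumset m ((c + ·) '' B)) := by
  have hc : 0 ≤ c := (mul_nonneg (Nat.cast_nonneg h) hδ).trans hhδ.le
  have hT : IsCompact ((c + ·) '' (B + Icc 0 ((h - 1) * δ))) :=
    (hB.add isCompact_Icc).image (continuous_const_add c)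
  have hR : IsCompact (⋃ m ∈ (Finset.range (h + 1)).erase 1,
      sumset (h - m) (Icc 0 δ) + sumset m ((c + ·) '' B)) :=
    Finset.isCompact_biUnion _ fun m _ =>
      (isCompact_Icc.sumset _).add ((hB.image (continuous_const_add c)).sumset _)
  have hdisj : Disjoint ((c + ·) '' (B + Icc 0 ((h - 1) * δ)))
      (⋃ m ∈ (Finset.range (h + 1)).erase 1,
        sumset (h - m) (Icc 0 δ) + sumset m ((c + ·) '' B)) := by
    refine disjoint_of_subset_right
      (biUnion_sumset_Icc_add_sumset_image_subset hδ hc (hBM.trans Icc_subset_Ici_self))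
      (disjoint_left.2 ?_)
    rintro _ ⟨_, ⟨b, hb, t, ht, rfl⟩, rfl⟩ hx
    have := hBM hb
    rcases hx with hx | hx <;> simp only [mem_Icc, mem_Ici] at * <;> linarith
  rw [sumset_Icc_union_image_add hh hδ, measureReal_union hdisj hR.measurableSet
    hT.measure_lt_top.ne hR.measure_lt_top.ne, measureReal_image_const_add]

lemma measureReal_sumset_sub_of_sumset_eq (hh : 1 ≤ h) (hδ : 0 ≤ δ) (hhδ : h * δ < c) {M : ℝ}
    (hMc : M + (h - 1) * δ < c) {B B' : Set ℝ} (hB : IsCompact B) (hB' : IsCompact B')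
    (hBM : B ⊆ Icc 0 M) (hB'M : B' ⊆ Icc 0 M) (hBB' : ∀ m, 2 ≤ m → sumset m B = sumset m B') :
    volume.real (sumset h (Icc 0 δ ∪ (c + ·) '' B)) -
        volume.real (sumset h (Icc 0 δ ∪ (c + ·) '' B')) =
      volume.real (B + Icc 0 ((h - 1) * δ)) - volume.real (B' + Icc 0 ((h - 1) * δ)) := by
  have hrest : ⋃ m ∈ (Finset.range (h + 1)).erase 1,
      sumset (h - m) (Icc 0 δ) + sumset m ((c + ·) '' B) =
      ⋃ m ∈ (Finset.range (h + 1)).erase 1,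
        sumset (h - m) (Icc 0 δ) + sumset m ((c + ·) '' B') := by
    refine iUnion₂_congr fun m hm => ?_
    obtain rfl | hm2 : m = 0 ∨ 2 ≤ m := by
      have := (Finset.mem_erase.1 hm).1
      omega
    · simp only [sumset_zero]
    · rw [sumset_image_const_add, sumset_image_const_add, hBB' m hm2]
  rw [measureReal_sumset_Icc_union_image_add hh hδ hhδ hMc hB hBM,
    measureReal_sumset_Icc_union_image_add hh hδ hhδ hMc hB' hB'M, hrest, add_sub_add_right_eq_sub]

end Decomposition

lemma sumset_eq_Icc_of_sumset_two_eq {B : Set ℝ} {M : ℝ} (hBM : B ⊆ Icc 0 M) (h0 : 0 ∈ B)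
    (hM : M ∈ B) (h2 : sumset 2 B = Icc 0 (2 * M)) {m : ℕ} (hm : 2 ≤ m) :
    sumset m B = Icc 0 (m * M) := by
  induction m, hm using Nat.le_induction with
  | base => exact_mod_cast h2
  | succ m hm ih =>
    have hM0 : 0 ≤ M := (hBM hM).1
    have hmM : M ≤ m * M := le_mul_of_one_le_left hM0 (by exact_mod_cast (by omega : 1 ≤ m))
    rw [sumset_succ, ih, Nat.cast_succ, add_one_mul]
    refine subset_antisymm ?_ fun x hx => ?_
    · rintro _ ⟨x, hx, b, hb, rfl⟩
      have := hBM hb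
      simp only [mem_Icc] at *
      constructor <;> linarith
    by_cases hxm : x ≤ m * M
    · exact ⟨x, ⟨hx.1, hxm⟩, 0, h0, add_zero x⟩
    · exact ⟨x - M, ⟨by linarith, by linarith [hx.2]⟩, M, hM, sub_add_cancel x M⟩

section TwoIntervals

variable {ε : ℝ} {Y : Set ℝ}

lemma union_subset_Icc_of_subset (hY : Y ⊆ Icc (1 + ε) (2 - 2 * ε)) (hε0 : 0 ≤ ε) :
    Icc 0 (1 - ε) ∪ Icc 2 (3 - ε) ∪ Y ⊆ Icc 0 (3 - ε) := by
  rintro x ((hx | hx) | hx)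
  · exact ⟨hx.1, by linarith [hx.2]⟩
  · exact ⟨by linarith [hx.1], hx.2⟩
  · have := hY hx
    exact ⟨by linarith [this.1], by linarith [this.2]⟩

lemma sumset_two_union_eq_Icc (hY : Y ⊆ Icc (1 + ε) (2 - 2 * ε)) (hε0 : 0 ≤ ε) {y : ℝ}
    (hy : y ∈ Y) : sumset 2 (Icc 0 (1 - ε) ∪ Icc 2 (3 - ε) ∪ Y) = Icc 0 (2 * (3 - ε)) := by
  obtain ⟨hy1, hy2⟩ := hY hy
  have hI : ∀ {x}, 0 ≤ x → x ≤ 1 - ε → x ∈ Icc 0 (1 - ε) ∪ Icc 2 (3 - ε) ∪ Y :=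
    fun h1 h2 => Or.inl (Or.inl ⟨h1, h2⟩)
  have hJ : ∀ {x}, 2 ≤ x → x ≤ 3 - ε → x ∈ Icc 0 (1 - ε) ∪ Icc 2 (3 - ε) ∪ Y :=
    fun h1 h2 => Or.inl (Or.inr ⟨h1, h2⟩)
  rw [show sumset 2 _ = _ from sumset_succ 1 _, sumset_one]
  refine subset_antisymm ?_ fun x ⟨hx0, hx⟩ => ?_
  · refine (add_subset_add (union_subset_Icc_of_subset hY hε0)
      (union_subset_Icc_of_subset hY hε0)).trans ?_
    rw [Icc_add_Icc (by linarith) (by linarith)]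
    exact Icc_subset_Icc (by norm_num) (by linarith)
  -- each range of `x` is covered by a sum of one of the intervals and `0`, `y` or `3 - ε`
  rcases le_or_gt x (2 - 2 * ε) with h1 | h1
  · exact ⟨x / 2, hI (by linarith) (by linarith), x / 2, hI (by linarith) (by linarith), by ring⟩
  rcases le_or_gt x 2 with h2 | h2
  · exact ⟨y, Or.inr hy, x - y, hI (by linarith) (by linarith), by ring⟩
  rcases le_or_gt x (3 - ε) with h3 | h3
  · exact ⟨x, hJ h2.le h3, 0, hI le_rfl (by linarith), by ring⟩
  rcases le_or_gt x (4 - 2 * ε) with h4 | h4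
  · exact ⟨3 - ε, hJ (by linarith) le_rfl, x - (3 - ε), hI (by linarith) (by linarith), by ring⟩
  rcases le_or_gt x 4 with h5 | h5
  · exact ⟨y, Or.inr hy, x - y, hJ (by linarith) (by linarith), by ring⟩
  · exact ⟨x / 2, hJ (by linarith) (by linarith), x / 2, hJ (by linarith) (by linarith), by ring⟩

lemma sumset_union_eq_Icc (hY : Y ⊆ Icc (1 + ε) (2 - 2 * ε)) (hε0 : 0 ≤ ε) (hYne : Y.Nonempty)
    {m : ℕ} (hm : 2 ≤ m) : sumset m (Icc 0 (1 - ε) ∪ Icc 2 (3 - ε) ∪ Y) = Icc 0 (m * (3 - ε)) :=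
  have hε : ε ≤ 1 / 3 := by obtain ⟨y, hy⟩ := hYne; linarith [(hY hy).1, (hY hy).2]
  sumset_eq_Icc_of_sumset_two_eq (union_subset_Icc_of_subset hY hε0)
    (Or.inl (Or.inl ⟨le_rfl, by linarith⟩)) (Or.inl (Or.inr ⟨by linarith, le_rfl⟩))
    (sumset_two_union_eq_Icc hY hε0 hYne.some_mem) hm

lemma measureReal_union_add_Icc {η : ℝ} (hη : η < ε) (hY : IsCompact Y)
    (hYsub : Y ⊆ Icc (1 + ε) (2 - 2 * ε)) :
    volume.real ((Icc 0 (1 - ε) ∪ Icc 2 (3 - ε) ∪ Y) + Icc 0 η) =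
      volume.real ((Icc 0 (1 - ε) ∪ Icc 2 (3 - ε)) + Icc 0 η) + volume.real (Y + Icc 0 η) := by
  have hdisj : Disjoint ((Icc 0 (1 - ε) ∪ Icc 2 (3 - ε)) + Icc 0 η) (Y + Icc 0 η) := by
    refine disjoint_left.2 ?_
    rintro _ ⟨x, hx, t, ht, rfl⟩ ⟨y, hy, t', ht', heq⟩
    have := hYsub hy
    rcases hx with hx | hx <;> simp only [mem_Icc] at * <;> linarith
  rw [union_add, measureReal_union hdisj (hY.add isCompact_Icc).measurableSet
    ((isCompact_Icc.union isCompact_Icc).add isCompact_Icc).measure_lt_top.ne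
    (hY.add isCompact_Icc).measure_lt_top.ne]

lemma measureReal_sumset_sub_eq {h : ℕ} {δ c : ℝ} (hh : 1 ≤ h) (hδ : 0 ≤ δ) (hhδ : h * δ < c)
    (hηc : 3 - ε + (h - 1) * δ < c) (hηε : (h - 1) * δ < ε) (hε0 : 0 ≤ ε) {Y' : Set ℝ}
    (hY : IsCompact Y) (hY' : IsCompact Y') (hYsub : Y ⊆ Icc (1 + ε) (2 - 2 * ε))
    (hY'sub : Y' ⊆ Icc (1 + ε) (2 - 2 * ε)) (hYne : Y.Nonempty) (hY'ne : Y'.Nonempty) :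
    volume.real (sumset h (Icc 0 δ ∪ (c + ·) '' (Icc 0 (1 - ε) ∪ Icc 2 (3 - ε) ∪ Y))) -
        volume.real (sumset h (Icc 0 δ ∪ (c + ·) '' (Icc 0 (1 - ε) ∪ Icc 2 (3 - ε) ∪ Y'))) =
      volume.real (Y + Icc 0 ((h - 1) * δ)) - volume.real (Y' + Icc 0 ((h - 1) * δ)) := by
  rw [measureReal_sumset_sub_of_sumset_eq hh hδ hhδ hηc
      ((isCompact_Icc.union isCompact_Icc).union hY)
      ((isCompact_Icc.union isCompact_Icc).union hY')
      (union_subset_Icc_of_subset hYsub hε0) (union_subset_Icc_of_subset hY'sub hε0)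
      fun m hm => by
        rw [sumset_union_eq_Icc hYsub hε0 hYne hm, sumset_union_eq_Icc hY'sub hε0 hY'ne hm],
    measureReal_union_add_Icc hηε hY hYsub, measureReal_union_add_Icc hηε hY' hY'sub,
    add_sub_add_left_eq_sub]

end TwoIntervals

section Gaps

variable {ι : Type*} {s : Finset ι} {u v : ι → ℝ} {a b : ℝ}

lemma Icc_diff_biUnion_Ioo_add_Icc {η : ℝ} (hab : a ≤ b) (hη : 0 ≤ η)
    (hgap : ∀ p ∈ s, a ≤ u p ∧ u p ≤ v p ∧ v p ≤ b)
    (hsep : ∀ p ∈ s, ∀ q ∈ s, p ≠ q → v p ≤ u q ∨ v q ≤ u p) :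
    (Icc a b \ ⋃ p ∈ s, Ioo (u p) (v p)) + Icc 0 η =
      Icc a (b + η) \ ⋃ p ∈ s, Ioo (u p + η) (v p) := by
  have hends : ∀ q ∈ s, u q ∉ ⋃ p ∈ s, Ioo (u p) (v p) ∧ v q ∉ ⋃ p ∈ s, Ioo (u p) (v p) := by
    intro q hq
    have huv := (hgap q hq).2.1
    simp only [mem_iUnion₂, mem_Ioo, not_exists, not_and, not_lt]
    refine ⟨fun p hp h1 => ?_, fun p hp h1 => ?_⟩ <;> obtain rfl | hne := eq_or_ne p q
    · exact (lt_irrefl _ h1).elim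
    · rcases hsep p hp q hq hne with h | h <;> linarith
    · exact le_rfl
    · rcases hsep p hp q hq hne with h | h <;> linarith
  ext x
  constructor
  · rintro ⟨z, ⟨⟨hza, hzb⟩, hz⟩, t, ⟨ht0, htη⟩, rfl⟩
    refine ⟨⟨by linarith, by linarith⟩, fun hx => hz ?_⟩
    obtain ⟨p, hp, h1, h2⟩ := mem_iUnion₂.1 hx
    exact mem_biUnion hp ⟨by linarith, by linarith⟩
  rintro ⟨⟨hax, hxb⟩, hx⟩
  have hmin : x - η ≤ min x b := le_min (by linarith) (by linarith)
  by_cases hz : min x b ∈ ⋃ p ∈ s, Ioo (u p) (v p)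
  · -- replace `min x b` by the endpoint of its gap on the correct side of `x`
    obtain ⟨p, hp, h1, h2⟩ := mem_iUnion₂.1 hz
    obtain ⟨hap, huv, hvb⟩ := hgap p hp
    have hmx : min x b ≤ x := min_le_left x b
    by_cases hxu : x ≤ u p + η
    · exact ⟨u p, ⟨⟨hap, by linarith⟩, (hends p hp).1⟩, x - u p, ⟨by linarith, by linarith⟩,
        by ring⟩
    · have hvx : v p ≤ x := not_lt.1 fun h => hx (mem_biUnion hp ⟨not_le.1 hxu, h⟩)
      exact ⟨v p, ⟨⟨by linarith, hvb⟩, (hends p hp).2⟩, x - v p, ⟨by linarith, by linarith⟩,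
        by ring⟩
  · exact ⟨min x b, ⟨⟨le_min hax hab, min_le_right x b⟩, hz⟩, x - min x b,
      ⟨by linarith [min_le_left x b], by linarith⟩, by ring⟩

lemma measureReal_Icc_diff_biUnion_Ioo (hab : a ≤ b) (hau : ∀ p ∈ s, a ≤ u p)
    (hvb : ∀ p ∈ s, v p ≤ b) (hsep : ∀ p ∈ s, ∀ q ∈ s, p ≠ q → v p ≤ u q ∨ v q ≤ u p) :
    volume.real (Icc a b \ ⋃ p ∈ s, Ioo (u p) (v p)) = b - a - ∑ p ∈ s, max (v p - u p) 0 := by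
  have hsub : ⋃ p ∈ s, Ioo (u p) (v p) ⊆ Icc a b :=
    iUnion₂_subset fun p hp x hx => ⟨(hau p hp).trans hx.1.le, hx.2.le.trans (hvb p hp)⟩
  have hdisj : (s : Set ι).PairwiseDisjoint fun p => Ioo (u p) (v p) := by
    intro p hp q hq hne
    refine disjoint_left.2 fun x hxp hxq => ?_
    rcases hsep p hp q hq hne with h | h <;> linarith [hxp.1, hxp.2, hxq.1, hxq.2]
  rw [measureReal_sdiff hsub (s.measurableSet_biUnion fun _ _ => measurableSet_Ioo)
      measure_Icc_lt_top.ne,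
    measureReal_biUnion_finset hdisj (fun _ _ => measurableSet_Ioo)
      fun _ _ => measure_Ioo_lt_top.ne,
    Real.volume_real_Icc_of_le hab]
  simp_rw [Real.volume_real_Ioo]

lemma exists_separated_of_card_mul_le (s : Finset ι) (g : ι → ℝ) (hg0 : ∀ p ∈ s, 0 ≤ g p)
    (hfit : ∀ p ∈ s, s.card * g p ≤ b - a) :
    ∃ u : ι → ℝ, (∀ p ∈ s, a ≤ u p ∧ u p + g p ≤ b) ∧
      ∀ p ∈ s, ∀ q ∈ s, p ≠ q → u p + g p ≤ u q ∨ u q + g q ≤ u p := by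
  classical
  -- the `k`-th of `s.card` slots of width `w` subdividing `[a, b]` receives one gap
  set w := (b - a) / s.card
  let k : ι → ℕ := fun p => if hp : p ∈ s then s.equivFin ⟨p, hp⟩ else 0
  have hk : ∀ p ∈ s, k p + 1 ≤ s.card := fun p hp => by simp [k, hp]
  have hkinj : ∀ p ∈ s, ∀ q ∈ s, k p = k q → p = q := fun p hp q hq h => by
    simpa [k, hp, hq, Fin.val_inj] using h
  have hgw : ∀ p ∈ s, 0 ≤ w ∧ g p ≤ w := fun p hp => by
    have : 0 < (s.card : ℝ) := by exact_mod_cast Finset.card_pos.2 ⟨p, hp⟩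
    have : g p ≤ w := by rw [le_div_iff₀ this]; linarith [hfit p hp]
    exact ⟨(hg0 p hp).trans this, this⟩
  have hslot : ∀ p ∈ s, ∀ (j : ℕ), k p + 1 ≤ j → a + k p * w + g p ≤ a + j * w := by
    intro p hp j hj
    have : ((k p + 1 : ℕ) : ℝ) ≤ j := by exact_mod_cast hj
    push_cast at this
    nlinarith [hgw p hp]
  refine ⟨fun p => a + k p * w, fun p hp => ⟨?_, ?_⟩, fun p hp q hq hne => ?_⟩
  · linarith [mul_nonneg (Nat.cast_nonneg (k p)) (hgw p hp).1]
  · have := hslot p hp _ (hk p hp)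
    rwa [mul_div_cancel₀ _ (by exact_mod_cast (Finset.card_pos.2 ⟨p, hp⟩).ne'), add_sub_cancel]
      at this
  · rcases lt_or_gt_of_ne fun h => hne (hkinj p hp q hq h) with h | h
    · exact Or.inl (hslot p hp _ h)
    · exact Or.inr (hslot q hq _ h)

lemma exists_isCompact_measureReal_add_Icc_eq (hab : a ≤ b) (s : Finset ι) (g : ι → ℝ)
    (hg0 : ∀ p ∈ s, 0 ≤ g p) (hfit : ∀ p ∈ s, s.card * g p ≤ b - a) :
    ∃ Y : Set ℝ, IsCompact Y ∧ b ∈ Y ∧ Y ⊆ Icc a b ∧ ∀ η, 0 ≤ η →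
      volume.real (Y + Icc 0 η) = b + η - a - ∑ p ∈ s, max (g p - η) 0 := by
  obtain ⟨u, hu, hsep⟩ := exists_separated_of_card_mul_le s g hg0 hfit
  refine ⟨Icc a b \ ⋃ p ∈ s, Ioo (u p) (u p + g p),
    isCompact_Icc.diff (isOpen_biUnion fun _ _ => isOpen_Ioo), ⟨right_mem_Icc.2 hab, ?_⟩,
    sdiff_subset, fun η hη => ?_⟩
  · rw [mem_iUnion₂]
    rintro ⟨p, hp, -, h⟩
    linarith [(hu p hp).2]
  rw [Icc_diff_biUnion_Ioo_add_Icc hab hη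
      (fun p hp => ⟨(hu p hp).1, by linarith [hg0 p hp], (hu p hp).2⟩) hsep,
    measureReal_Icc_diff_biUnion_Ioo (by linarith) (fun p hp => by linarith [(hu p hp).1])
      (fun p hp => by linarith [(hu p hp).2])
      fun p hp q hq hne => (hsep p hp q hq hne).imp (fun h => by linarith) fun h => by linarith]
  simp_rw [add_sub_add_left_eq_sub]

end Gaps

lemma sum_sigma_range_max_sub {H h : ℕ} (hh : 1 ≤ h) {δ : ℝ} (hδ : 0 ≤ δ) (ℓ : ℕ → ℕ) :
    ∑ p ∈ (Finset.Icc 1 H).sigma (fun r => Finset.range (ℓ r)), max (p.1 * δ - (h - 1) * δ) 0 =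
      δ * ∑ r ∈ Finset.Icc h H, ((r : ℝ) - h + 1) * ℓ r := by
  rw [Finset.sum_sigma, Finset.mul_sum]
  simp only [Finset.sum_const, Finset.card_range, nsmul_eq_mul]
  rw [← Finset.sum_subset (Finset.Icc_subset_Icc_left hh) fun r hr hrh => ?_]
  · refine Finset.sum_congr rfl fun r hr => ?_
    have : (h : ℝ) ≤ r := by exact_mod_cast (Finset.mem_Icc.1 hr).1
    rw [max_eq_left (by nlinarith)]
    ring
  · have hrh : r + 1 ≤ h := by
      simp only [Finset.mem_Icc] at hr hrh
      omega
    have : (r : ℝ) + 1 ≤ h := by exact_mod_cast hrh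
    rw [max_eq_right (by nlinarith), mul_zero]

lemma exists_isCompact_measureReal_add_Icc_eq_sum {a b δ : ℝ} (hab : a ≤ b) (hδ : 0 ≤ δ) (H : ℕ)
    (ℓ : ℕ → ℕ) (hfit : ((∑ r ∈ Finset.Icc 1 H, ℓ r : ℕ) : ℝ) * (H * δ) ≤ b - a) :
    ∃ Y : Set ℝ, IsCompact Y ∧ b ∈ Y ∧ Y ⊆ Icc a b ∧ ∀ h : ℕ, 1 ≤ h →
      volume.real (Y + Icc 0 ((h - 1) * δ)) =
        b + (h - 1) * δ - a - δ * ∑ r ∈ Finset.Icc h H, ((r : ℝ) - h + 1) * ℓ r := by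
  -- for each `r ≤ H`, `ℓ r` gaps of length `r * δ`
  obtain ⟨Y, hYc, hbY, hYsub, hY⟩ := exists_isCompact_measureReal_add_Icc_eq hab
    ((Finset.Icc 1 H).sigma fun r => Finset.range (ℓ r)) (fun p => p.1 * δ)
    (fun p _ => by positivity) fun p hp => by
      have : (p.1 : ℝ) ≤ H := by exact_mod_cast (Finset.mem_Icc.1 (Finset.mem_sigma.1 hp).1).2
      rw [Finset.card_sigma]
      simp only [Finset.card_range]
      exact (mul_le_mul_of_nonneg_left (mul_le_mul_of_nonneg_right this hδ)
        (Nat.cast_nonneg _)).trans hfit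
  refine ⟨Y, hYc, hbY, hYsub, fun h hh => ?_⟩
  have : (1 : ℝ) ≤ h := by exact_mod_cast hh
  rw [hY _ (by nlinarith), sum_sigma_range_max_sub hh hδ]

theorem measure_difference_construction_general (H n : ℕ) (hH : 2 ≤ H)
    (ℓ : ℕ → ℕ → ℕ) (L : ℕ → ℕ) (hL : ∀ i, L i = ∑ j ∈ Finset.Icc 1 H, ℓ i j)
    (hLpos : ∀ i, 1 ≤ i → i ≤ n → 0 < L i)
    (ε δ c : ℝ) (hε0 : 0 < ε) (hε : ε < 1 / 3) (hδ0 : 0 < δ)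
    (hδ1 : δ < ε / ((H : ℝ) - 1))
    (hδ2 : ∀ i, 1 ≤ i → i ≤ n → δ < (1 - 3 * ε) / (2 * (H : ℝ) * (L i : ℝ)))
    (hc : ((H : ℝ) - 1) * δ + 3 < c)
    (X : Set ℝ) (hX : X = Set.Icc 0 (1 - ε) ∪ Set.Icc 2 (3 - ε)) :
    ∃ Y : ℕ → Set ℝ,
      (∀ i, 1 ≤ i → i ≤ n →
        (Y i).Nonempty ∧ MeasurableSet (Y i) ∧ Y i ⊆ Set.Icc (1 + ε) (2 - 2 * ε)) ∧
      (∀ A : ℕ → Set ℝ,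
        (∀ i, 1 ≤ i → i ≤ n → A i = Set.Icc 0 δ ∪ ((c + ·) '' (X ∪ Y i))) →
        ∀ i, 1 ≤ i → i ≤ n - 1 → ∀ h, 1 ≤ h → h ≤ H →
          (volume (sumset h (A i))).toReal - (volume (sumset h (A (i + 1)))).toReal
            = δ * ∑ r ∈ Finset.Icc h H,
                ((r : ℝ) - (h : ℝ) + 1) * ((ℓ (i + 1) r : ℝ) - (ℓ i r : ℝ))) := by
  choose! Y hY using fun j (hj1 : 1 ≤ j) (hj2 : j ≤ n) =>
    exists_isCompact_measureReal_add_Icc_eq_sum (a := 1 + ε) (b := 2 - 2 * ε) (by linarith)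
      hδ0.le H (ℓ j) (by
        have hHL : (0 : ℝ) < 2 * H * L j := by have := hLpos j hj1 hj2; positivity
        have := (lt_div_iff₀ hHL).1 (hδ2 j hj1 hj2)
        rw [← hL]
        nlinarith)
  refine ⟨Y, fun j hj1 hj2 => ?_, ?_⟩
  · obtain ⟨hYc, hbY, hYsub, -⟩ := hY j hj1 hj2
    exact ⟨⟨_, hbY⟩, hYc.measurableSet, hYsub⟩
  rintro A hA i hi1 hi2 h hh1 hh2
  subst hX
  obtain ⟨hYc, hbY, hYsub, hvol⟩ := hY i hi1 (by omega)
  obtain ⟨hYc', hbY', hYsub', hvol'⟩ := hY (i + 1) (by omega) (by omega)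
  have hH1 : (1 : ℝ) ≤ H - 1 := by linarith [show (2 : ℝ) ≤ H by exact_mod_cast hH]
  have hHδ : ((H : ℝ) - 1) * δ < ε := by rwa [lt_div_iff₀ (by linarith), mul_comm] at hδ1
  have hδH : δ ≤ ((H : ℝ) - 1) * δ := le_mul_of_one_le_left hδ0.le hH1
  have hhH : ((h : ℝ) - 1) * δ ≤ ((H : ℝ) - 1) * δ := by gcongr
  simp only [hA i hi1 (by omega), hA (i + 1) (by omega) (by omega), ← measureReal_def]
  rw [measureReal_sumset_sub_eq hh1 hδ0.le (by linarith) (by linarith) (by linarith) hε0.le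
    hYc hYc' hYsub hYsub' ⟨_, hbY⟩ ⟨_, hbY'⟩, hvol h hh1, hvol' h hh1]
  simp only [mul_sub, Finset.sum_sub_distrib]
  ring

/-- Let `H ≥ 2` and `n ≥ 2` be integers and, for `i = 1,…,n` and `j = 1,…,H`, let
`ℓ i j` be nonnegative integers with `L i = Σ_{j=1}^{H} ℓ i j > 0` for every `i`.
Let `ε, δ, c` be reals with `0 < ε < 1/3`,
`0 < δ < min_i { ε/(H−1), (1−3ε)/(2H·L i) }`, and `(H−1)δ + 3 < c`.
Let `X = [0, 1−ε] ∪ [2, 3−ε]`.  Then `[1+ε, 2−2ε]` contains nonempty measurable sets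
`Y 1, …, Y n` such that the sets `A i = [0, δ] ∪ (c + (X ∪ Y i))` satisfy
`μ(h(A i)) − μ(h(A (i+1))) = δ·Σ_{r=h}^{H} (r−h+1)·(ℓ (i+1) r − ℓ i r)`
for all `i = 1,…,n−1` and all `h = 1,…,H`. -/
theorem measure_difference_construction (H n : ℕ) (hH : 2 ≤ H) (hn : 2 ≤ n)
    (ℓ : ℕ → ℕ → ℕ) (L : ℕ → ℕ) (hL : ∀ i, L i = ∑ j ∈ Finset.Icc 1 H, ℓ i j)
    (hLpos : ∀ i, 1 ≤ i → i ≤ n → 0 < L i)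
    (ε δ c : ℝ) (hε0 : 0 < ε) (hε : ε < 1 / 3) (hδ0 : 0 < δ)
    (hδ1 : δ < ε / ((H : ℝ) - 1))
    (hδ2 : ∀ i, 1 ≤ i → i ≤ n → δ < (1 - 3 * ε) / (2 * (H : ℝ) * (L i : ℝ)))
    (hc : ((H : ℝ) - 1) * δ + 3 < c)
    (X : Set ℝ) (hX : X = Set.Icc 0 (1 - ε) ∪ Set.Icc 2 (3 - ε)) :
    ∃ Y : ℕ → Set ℝ,
      (∀ i, 1 ≤ i → i ≤ n →
        (Y i).Nonempty ∧ MeasurableSet (Y i) ∧ Y i ⊆ Set.Icc (1 + ε) (2 - 2 * ε)) ∧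
      (∀ A : ℕ → Set ℝ,
        (∀ i, 1 ≤ i → i ≤ n → A i = Set.Icc 0 δ ∪ ((c + ·) '' (X ∪ Y i))) →
        ∀ i, 1 ≤ i → i ≤ n - 1 → ∀ h, 1 ≤ h → h ≤ H →
          (volume (sumset h (A i))).toReal - (volume (sumset h (A (i + 1)))).toReal
            = δ * ∑ r ∈ Finset.Icc h H,
                ((r : ℝ) - (h : ℝ) + 1) * ((ℓ (i + 1) r : ℝ) - (ℓ i r : ℝ))) :=
  measure_difference_construction_general H n hH ℓ L hL hLpos ε δ c hε0 hε hδ0 hδ1 hδ2 hc X hX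
end
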